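/- arXiv:1707.04707 — 4 statements merged into one kernel-verified Lean document; each statement's English description precedes it below -/
import Mathlib

section
/- Let U_1,…,U_r ∈ ℂ[t_1,…,t_m,x_1,…,x_r] be homogeneous polynomials (U_i of total degree d_i ≥ 1) such that the restrictions W_1 = U_1(0;·),…,W_r = U_r(0;·) ∈ ℂ[x_1,…,x_r] are algebraically independent over ℂ. Then for every ζ ∈ ℂ^m, the specialized polynomials U_1(ζ;·),…,U_r(ζ;·) ∈ ℂ[x_1,…,x_r] are algebraically independent over ℂ. -/
open MvPolynomial

/-- Specialization `t := ζ` of the first block of variables: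
`ℂ[t₁,…,t_m,x₁,…,x_r] → ℂ[x₁,…,x_r]`. -/
noncomputable def specializeT {m r : ℕ} (ζ : Fin m → ℂ) :
    MvPolynomial (Fin m ⊕ Fin r) ℂ →ₐ[ℂ] MvPolynomial (Fin r) ℂ :=
  aeval (Sum.elim (fun i => C (ζ i)) X)

namespace Stmt6Aux

variable {m r : ℕ}

lemma specializeT_monomial (ζ : Fin m → ℂ) (σ : Fin m ⊕ Fin r →₀ ℕ) (c : ℂ) :
    specializeT ζ (monomial σ c) =
      C (c * ∏ a, ζ a ^ σ (Sum.inl a)) *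
        ∏ b, (X b : MvPolynomial (Fin r) ℂ) ^ σ (Sum.inr b) := by
  rw [specializeT, aeval_monomial, Finsupp.prod_fintype _ _ (fun j => pow_zero _),
    Fintype.prod_sum_type]
  simp only [Sum.elim_inl, Sum.elim_inr, map_mul, map_prod, map_pow, algebraMap_eq]
  ring

lemma degree_of_mem_support {U : MvPolynomial (Fin m ⊕ Fin r) ℂ} {D : ℕ}
    (hU : U.IsHomogeneous D) {σ : Fin m ⊕ Fin r →₀ ℕ} (hσ : σ ∈ U.support) :
    (∑ a, σ (Sum.inl a)) + (∑ b, σ (Sum.inr b)) = D := by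
  have h := hU (mem_support_iff.mp hσ)
  rw [Finsupp.weight_apply, Finsupp.sum_fintype] at h
  · simp only [Pi.one_apply, smul_eq_mul, mul_one] at h
    rw [← h, Fintype.sum_sum_type]
  · intro i; simp

lemma totalDegree_specializeT_le (ζ : Fin m → ℂ) {U : MvPolynomial (Fin m ⊕ Fin r) ℂ} {D : ℕ}
    (hU : U.IsHomogeneous D) : (specializeT ζ U).totalDegree ≤ D := by
  conv_lhs => rw [U.as_sum, map_sum]
  apply totalDegree_finsetSum_le
  intro σ hσ
  rw [specializeT_monomial]
  refine (totalDegree_mul _ _).trans ?_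
  rw [totalDegree_C, zero_add]
  refine (totalDegree_finset_prod _ _).trans ?_
  calc ∑ b, ((X b : MvPolynomial (Fin r) ℂ) ^ σ (Sum.inr b)).totalDegree
      ≤ ∑ b, σ (Sum.inr b) := Finset.sum_le_sum fun b _ =>
        (totalDegree_pow _ _).trans (by rw [totalDegree_X, mul_one])
    _ ≤ D := by rw [← degree_of_mem_support hU hσ]; omega

lemma homogeneousComponent_specializeT (ζ : Fin m → ℂ) {U : MvPolynomial (Fin m ⊕ Fin r) ℂ}
    {D : ℕ} (hU : U.IsHomogeneous D) :
    homogeneousComponent D (specializeT ζ U) = specializeT (0 : Fin m → ℂ) U := by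
  conv_lhs => rw [U.as_sum, map_sum, map_sum]
  conv_rhs => rw [U.as_sum, map_sum]
  refine Finset.sum_congr rfl fun σ hσ => ?_
  rw [specializeT_monomial, specializeT_monomial]
  have hB : (∏ b, (X b : MvPolynomial (Fin r) ℂ) ^ σ (Sum.inr b)).IsHomogeneous
      (∑ b, σ (Sum.inr b)) :=
    IsHomogeneous.prod _ _ _ fun b _ => isHomogeneous_X_pow _ _
  rw [homogeneousComponent_C_mul,
    homogeneousComponent_of_mem ((mem_homogeneousSubmodule _ _).mpr hB)]
  by_cases h : ∑ a, σ (Sum.inl a) = 0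
  · have hz : ∀ a, σ (Sum.inl a) = 0 := by
      intro a
      exact Finset.sum_eq_zero_iff.mp h a (Finset.mem_univ a)
    have hD : D = ∑ b, σ (Sum.inr b) := by
      rw [← degree_of_mem_support hU hσ, h, zero_add]
    rw [if_pos hD]
    simp [hz]
  · have hlt : ∑ b, σ (Sum.inr b) < D := by
      have := degree_of_mem_support hU hσ; omega
    rw [if_neg hlt.ne']
    obtain ⟨a, ha⟩ : ∃ a, σ (Sum.inl a) ≠ 0 := by
      by_contra hc
      push_neg at hc
      exact h (Finset.sum_eq_zero fun a _ => hc a)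
    have h0 : (∏ a, (0 : Fin m → ℂ) a ^ σ (Sum.inl a)) = 0 :=
      Finset.prod_eq_zero (Finset.mem_univ a) (by simp [zero_pow ha])
    simp only [h0, mul_zero, map_zero, zero_mul]

/-- `p` is zero or has total degree `< k`. -/
def Dlt (p : MvPolynomial (Fin r) ℂ) (k : ℕ) : Prop := p = 0 ∨ p.totalDegree < k

lemma Dlt.add {p q : MvPolynomial (Fin r) ℂ} {k : ℕ} (hp : Dlt p k) (hq : Dlt q k) :
    Dlt (p + q) k := by
  rcases hp with hp | hp
  · rw [hp, zero_add]; exact hq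
  rcases hq with hq | hq
  · rw [hq, add_zero]; exact Or.inr hp
  · exact Or.inr ((totalDegree_add p q).trans_lt (max_lt hp hq))

lemma Dlt.mul_right {p q : MvPolynomial (Fin r) ℂ} {k l : ℕ} (hp : Dlt p k)
    (hq : q.totalDegree ≤ l) : Dlt (p * q) (k + l) := by
  rcases hp with hp | hp
  · rw [hp, zero_mul]; exact Or.inl rfl
  · exact Or.inr ((totalDegree_mul p q).trans_lt (add_lt_add_of_lt_of_le hp hq))

lemma Dlt.mul_left {p q : MvPolynomial (Fin r) ℂ} {k l : ℕ} (hq : Dlt q l)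
    (hp : p.totalDegree ≤ k) : Dlt (p * q) (k + l) := by
  rw [mul_comm, add_comm]; exact hq.mul_right hp

lemma dlt_pow_sub {V W : MvPolynomial (Fin r) ℂ} {D : ℕ} (hV : V.totalDegree ≤ D)
    (hW : W.totalDegree ≤ D) (hVW : Dlt (V - W) D) (n : ℕ) :
    Dlt (V ^ n - W ^ n) (n * D) := by
  induction n with
  | zero => exact Or.inl (by simp)
  | succ n ih =>
      have key : V ^ (n + 1) - W ^ (n + 1) = V * (V ^ n - W ^ n) + (V - W) * W ^ n := by ring
      rw [key, add_mul n 1 D, one_mul, add_comm (n * D) D]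
      exact (ih.mul_left hV).add
        (hVW.mul_right ((totalDegree_pow _ _).trans (Nat.mul_le_mul_left n hW)))

lemma dlt_prod_sub {V W : Fin r → MvPolynomial (Fin r) ℂ} {D : Fin r → ℕ}
    (hV : ∀ i, (V i).totalDegree ≤ D i) (hW : ∀ i, (W i).totalDegree ≤ D i)
    (hVW : ∀ i, Dlt (V i - W i) (D i)) (α : Fin r → ℕ) (s : Finset (Fin r)) :
    Dlt (∏ i ∈ s, V i ^ α i - ∏ i ∈ s, W i ^ α i) (∑ i ∈ s, α i * D i) := by
  induction s using Finset.induction with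
  | empty => exact Or.inl (by simp)
  | @insert a s ha ih =>
      rw [Finset.prod_insert ha, Finset.prod_insert ha, Finset.sum_insert ha]
      have key : V a ^ α a * ∏ i ∈ s, V i ^ α i - W a ^ α a * ∏ i ∈ s, W i ^ α i =
          V a ^ α a * (∏ i ∈ s, V i ^ α i - ∏ i ∈ s, W i ^ α i) +
            (V a ^ α a - W a ^ α a) * ∏ i ∈ s, W i ^ α i := by ring
      rw [key]
      refine (ih.mul_left ((totalDegree_pow _ _).trans (Nat.mul_le_mul_left _ (hV a)))).add
        ((dlt_pow_sub (hV a) (hW a) (hVW a) (α a)).mul_right ?_)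
      exact (totalDegree_finset_prod _ _).trans (Finset.sum_le_sum fun i _ =>
        (totalDegree_pow _ _).trans (Nat.mul_le_mul_left _ (hW i)))

lemma dlt_of_component_zero {p : MvPolynomial (Fin r) ℂ} {k : ℕ}
    (hdeg : p.totalDegree ≤ k) (hc : homogeneousComponent k p = 0) : Dlt p k := by
  by_cases hp : p = 0
  · exact Or.inl hp
  rcases lt_or_eq_of_le hdeg with h | h
  · exact Or.inr h
  exfalso
  have hne : p.support.Nonempty :=
    Finset.nonempty_iff_ne_empty.mpr (fun he => hp (support_eq_empty.mp he))
  obtain ⟨μ, hμ, hμdeg⟩ := p.support.exists_mem_eq_sup hne (fun s : Fin r →₀ ℕ =>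
    s.sum fun _ e => e)
  have hdegμ : μ.degree = k := by
    rw [← h, totalDegree, hμdeg]; rfl
  have := coeff_homogeneousComponent k p μ
  rw [hc, coeff_zero, if_pos hdegμ] at this
  exact mem_support_iff.mp hμ this.symm

lemma aeval_expand (g : Fin r → MvPolynomial (Fin r) ℂ) (p : MvPolynomial (Fin r) ℂ) :
    aeval g p = ∑ σ ∈ p.support, C (coeff σ p) * ∏ i, g i ^ σ i := by
  conv_lhs => rw [p.as_sum, map_sum]
  refine Finset.sum_congr rfl fun σ _ => ?_
  rw [aeval_monomial, Finsupp.prod_fintype _ _ (fun j => pow_zero _), algebraMap_eq]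

end Stmt6Aux

open Stmt6Aux in
/-- If the `U i` are homogeneous of degree `d i ≥ 1` and the restrictions
`U i (0;·)` are algebraically independent over `ℂ`, then for every `ζ ∈ ℂ^m` the
specializations `U i (ζ;·)` are algebraically independent over `ℂ`. -/
theorem stmt6 {m r : ℕ} (U : Fin r → MvPolynomial (Fin m ⊕ Fin r) ℂ)
    (d : Fin r → ℕ) (hd : ∀ i, 1 ≤ d i) (hU : ∀ i, (U i).IsHomogeneous (d i))
    (hW : AlgebraicIndependent ℂ fun i => specializeT (0 : Fin m → ℂ) (U i))
    (ζ : Fin m → ℂ) :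
    AlgebraicIndependent ℂ fun i => specializeT ζ (U i) := by
  set V : Fin r → MvPolynomial (Fin r) ℂ := fun i => specializeT ζ (U i) with hVdef
  set W : Fin r → MvPolynomial (Fin r) ℂ := fun i => specializeT (0 : Fin m → ℂ) (U i) with hWdef
  -- basic facts
  have hWhom : ∀ i, (W i).IsHomogeneous (d i) := by
    intro i
    have hg : ∀ j, (Sum.elim (fun k => C ((0 : Fin m → ℂ) k)) X j :
        MvPolynomial (Fin r) ℂ).IsHomogeneous 1 := by
      rintro (a | b)
      · simpa using isHomogeneous_zero (Fin r) ℂ 1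
      · exact isHomogeneous_X _ _
    have h2 := (hU i).aeval (Sum.elim (fun k => C ((0 : Fin m → ℂ) k)) X) hg
    rw [one_mul] at h2
    exact h2
  have hVdeg : ∀ i, (V i).totalDegree ≤ d i := fun i => totalDegree_specializeT_le ζ (hU i)
  have hWdeg : ∀ i, (W i).totalDegree ≤ d i := fun i => (hWhom i).totalDegree_le
  have hcomp : ∀ i, homogeneousComponent (d i) (V i) = W i := fun i =>
    homogeneousComponent_specializeT ζ (hU i)
  have hdiff : ∀ i, Dlt (V i - W i) (d i) := by
    intro i
    apply dlt_of_component_zero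
    · exact (totalDegree_sub _ _).trans (max_le (hVdeg i) (hWdeg i))
    · rw [map_sub, hcomp i,
        homogeneousComponent_of_mem ((mem_homogeneousSubmodule _ _).mpr (hWhom i)),
        if_pos rfl, sub_self]
  -- the relation argument
  rw [algebraicIndependent_iff]
  intro P hPV
  by_contra hP0
  classical
  set N := weightedTotalDegree d P with hN
  have hwt : ∀ σ : Fin r →₀ ℕ, Finsupp.weight d σ = ∑ i, σ i * d i := by
    intro σ
    rw [Finsupp.weight_apply, Finsupp.sum_fintype]
    · simp [smul_eq_mul]
    · intro i; simp
  have hWpow : ∀ σ : Fin r →₀ ℕ, (∏ i, W i ^ σ i).IsHomogeneous (∑ i, σ i * d i) := by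
    intro σ
    refine IsHomogeneous.prod _ _ _ fun i _ => ?_
    have h2 := (hWhom i).pow (σ i)
    rwa [mul_comm] at h2
  have comp_prod : ∀ σ ∈ P.support,
      homogeneousComponent N (∏ i, V i ^ σ i) =
        if Finsupp.weight d σ = N then ∏ i, W i ^ σ i else 0 := by
    intro σ hσ
    have hle : Finsupp.weight d σ ≤ N := le_weightedTotalDegree d hσ
    have hdegV : (∏ i, V i ^ σ i).totalDegree ≤ ∑ i, σ i * d i :=
      (totalDegree_finset_prod _ _).trans (Finset.sum_le_sum fun i _ =>
        (totalDegree_pow _ _).trans (Nat.mul_le_mul_left _ (hVdeg i)))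
    by_cases hcase : Finsupp.weight d σ = N
    · rw [if_pos hcase]
      have hE := dlt_prod_sub hVdeg hWdeg hdiff (fun i => σ i) Finset.univ
      have key : (∏ i, V i ^ σ i) =
          (∏ i, W i ^ σ i) + ((∏ i, V i ^ σ i) - (∏ i, W i ^ σ i)) := by ring
      rw [key, map_add,
        homogeneousComponent_of_mem ((mem_homogeneousSubmodule _ _).mpr (hWpow σ)),
        if_pos (by rw [← hwt σ, hcase])]
      rcases hE with hE | hE
      · rw [hE, map_zero, add_zero]
      · rw [homogeneousComponent_eq_zero N _ (by rw [← hcase, hwt σ]; exact hE), add_zero]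
    · rw [if_neg hcase]
      exact homogeneousComponent_eq_zero _ _
        (lt_of_le_of_lt (hdegV.trans (hwt σ).ge) (lt_of_le_of_ne hle hcase))
  have hne : P.support.Nonempty :=
    Finset.nonempty_iff_ne_empty.mpr (fun he => hP0 (support_eq_empty.mp he))
  obtain ⟨σ₀, hσ₀, hwσ₀⟩ : ∃ σ₀ ∈ P.support, Finsupp.weight d σ₀ = N := by
    obtain ⟨σ₀, h1, h2⟩ := P.support.exists_mem_eq_sup hne (fun σ => Finsupp.weight d σ)
    exact ⟨σ₀, h1, by rw [hN, weightedTotalDegree, h2]⟩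
  set Q := weightedHomogeneousComponent d N P with hQ
  have hQne : Q ≠ 0 := by
    intro h0
    have h1 := coeff_weightedHomogeneousComponent (w := d) (n := N) (φ := P) σ₀
    rw [← hQ, h0, coeff_zero, if_pos hwσ₀] at h1
    exact mem_support_iff.mp hσ₀ h1.symm
  have hWQ : aeval W Q = 0 := by
    have e1 : homogeneousComponent N (aeval V P) = 0 := by rw [hPV, map_zero]
    rw [hQ, weightedHomogeneousComponent_apply, map_sum, ← e1, aeval_expand V P, map_sum,
      Finset.sum_filter]
    refine Finset.sum_congr rfl fun σ hσ => ?_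
    rw [homogeneousComponent_C_mul, comp_prod σ hσ, mul_ite, mul_zero]
    split_ifs with h
    · rw [aeval_monomial, Finsupp.prod_fintype _ _ (fun j => pow_zero _), algebraMap_eq]
    · rfl
  exact hQne (algebraicIndependent_iff.mp hW Q hWQ)
end

section
/- Let P_1,…,P_r ∈ ℂ[x_1,…,x_r] be homogeneous polynomials of degrees d_1,…,d_r ≥ 1 such that the polynomial ring ℂ[x_1,…,x_r] is integral over the ℂ-subalgebra generated by P_1,…,P_r. Let Q_1,…,Q_r ∈ ℂ[x_1,…,x_r] be polynomials such that for each i the difference Q_i − P_i is zero or has total degree strictly less than d_i. Then ℂ[x_1,…,x_r] is integral over the ℂ-subalgebra generated by Q_1,…,Q_r. -/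
/-! Being integral and of finite type over `A = ℂ[P]`, the ring `ℂ[x]` is a finite `A`-module,
spanned by some finite `S`. Every element of `A` is a constant plus an element of the ideal
`I = (P₁, …, P_r)`, so `ℂ[x] = span_ℂ S + I`. Hence a homogeneous `t` of degree `n` larger than
`N` (a bound for the degrees in `S` and the `dᵢ`) lies in the homogeneous ideal `I`, and
`t = ∑ cᵢ Pᵢ = ∑ Qᵢ cᵢ - ∑ cᵢ (Qᵢ - Pᵢ)` with `cᵢ` homogeneous of degree `n - dᵢ < n`, where also
`cᵢ (Qᵢ - Pᵢ)` has degree `< n`. By induction on `n`, the polynomials of degree `≤ N` span `ℂ[x]`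
as a module over `ℂ[Q]`, which is therefore finite, hence integral. -/

open MvPolynomial

section Adjoin

variable {R T : Type*} [CommRing R] [CommRing T] [Algebra R T] {s : Set T}

theorem exists_sub_algebraMap_mem_span_of_mem_adjoin {a : T} (ha : a ∈ Algebra.adjoin R s) :
    ∃ α : R, a - algebraMap R T α ∈ Ideal.span s := by
  let π := Ideal.Quotient.mkₐ R (Ideal.span s)
  have hπ : π a ∈ Algebra.adjoin R (π '' s) := by
    rw [Algebra.adjoin_image]
    exact Subalgebra.mem_map.2 ⟨a, ha, rfl⟩
  have hbot : π a ∈ (⊥ : Subalgebra R (T ⧸ Ideal.span s)) := by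
    refine Algebra.adjoin_le ?_ hπ
    rintro _ ⟨x, hx, rfl⟩
    exact ⟨0, by simp [π, Ideal.Quotient.eq_zero_iff_mem.2 (Ideal.subset_span hx)]⟩
  obtain ⟨α, hα⟩ := Algebra.mem_bot.1 hbot
  refine ⟨α, Ideal.Quotient.eq.1 ?_⟩
  simpa [π, Ideal.Quotient.mk_algebraMap] using hα.symm

theorem span_sup_restrictScalars_ideal_span_eq_top {S : Set T}
    (hS : Submodule.span (Algebra.adjoin R s) S = ⊤) :
    Submodule.span R S ⊔ (Ideal.span s).restrictScalars R = ⊤ := by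
  rw [eq_top_iff]
  rintro f -
  have hf : f ∈ Submodule.span (Algebra.adjoin R s) S := hS ▸ Submodule.mem_top
  induction hf using Submodule.span_induction with
  | mem x hx => exact Submodule.mem_sup_left (Submodule.subset_span hx)
  | zero => exact zero_mem _
  | add x y _ _ hx hy => exact add_mem hx hy
  | smul a x _ hx =>
    obtain ⟨α, hα⟩ := exists_sub_algebraMap_mem_span_of_mem_adjoin a.2
    have hax : a • x = (a - algebraMap R T α) * x + α • x := by
      rw [Subalgebra.smul_def, smul_eq_mul, Algebra.smul_def]; ring
    rw [hax]
    exact add_mem (Submodule.mem_sup_right (Ideal.mul_mem_right _ _ hα)) (Submodule.smul_mem _ _ hx)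

end Adjoin

theorem Module.Finite.of_fg_of_span_eq_top {R S M : Type*} [CommSemiring R] [Semiring S]
    [Algebra R S] [AddCommMonoid M] [Module R M] [Module S M] [IsScalarTower R S M]
    {V : Submodule R M} (hV : V.FG) (h : Submodule.span S (V : Set M) = ⊤) :
    Module.Finite S M := by
  obtain ⟨G, rfl⟩ := hV
  exact ⟨⟨G, by rwa [Submodule.span_span_of_tower] at h⟩⟩

namespace MvPolynomial

section CommSemiring

variable {R σ ι : Type*} [CommSemiring R]

theorem restrictTotalDegree_fg [Finite σ] (N : ℕ) : (restrictTotalDegree σ R N).FG := by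
  rw [restrictTotalDegree, restrictSupport_eq_span]
  exact Submodule.fg_span ((Finsupp.finite_of_degree_le N).image _)

attribute [local instance] gradedAlgebra

theorem homogeneousComponent_mul_of_isHomogeneous {p q : MvPolynomial σ R} {m n : ℕ}
    (hq : q.IsHomogeneous m) (hmn : m ≤ n) :
    homogeneousComponent n (p * q) = homogeneousComponent (n - m) p * q := by
  have := DirectSum.coe_decompose_mul_of_right_mem_of_le (homogeneousSubmodule σ R) (a := p) hq hmn
  rwa [← decomposition.decompose'_apply, ← decomposition.decompose'_apply]

theorem mem_of_forall_isHomogeneous_mem {S : Type*} [Semiring S] [Module S (MvPolynomial σ R)]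
    (W : Submodule S (MvPolynomial σ R)) {n : ℕ}
    (hW : ∀ j < n, ∀ t : MvPolynomial σ R, t.IsHomogeneous j → t ∈ W)
    {f : MvPolynomial σ R} (hf : f.totalDegree < n) : f ∈ W := by
  rw [← sum_homogeneousComponent f]
  refine Submodule.sum_mem _ fun j hj => hW j ?_ _ (homogeneousComponent_isHomogeneous j f)
  rw [Finset.mem_range] at hj
  omega

variable {P Q : ι → MvPolynomial σ R} {d : ι → ℕ}

theorem IsHomogeneous.mem_span_of_mem_restrictTotalDegree_sup
    (hP : ∀ i, (P i).IsHomogeneous (d i)) {t : MvPolynomial σ R} {N n : ℕ}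
    (ht : t.IsHomogeneous n) (hn : N < n)
    (hmem : t ∈ restrictTotalDegree σ R N ⊔ (Ideal.span (Set.range P)).restrictScalars R) :
    t ∈ Ideal.span (Set.range P) := by
  classical
  have hI : (Ideal.span (Set.range P)).IsHomogeneous (homogeneousSubmodule σ R) :=
    Ideal.homogeneous_span _ _ (by rintro _ ⟨i, rfl⟩; exact ⟨d i, hP i⟩)
  obtain ⟨v, hv, g, hg, rfl⟩ := Submodule.mem_sup.1 hmem
  rw [← homogeneousComponent_eq_self ht, map_add, homogeneousComponent_eq_zero _ _
    (((mem_restrictTotalDegree σ N v).1 hv).trans_lt hn), zero_add]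
  exact homogeneousComponent_mem_of_mem hI hg n

variable [Fintype ι]

theorem IsHomogeneous.exists_eq_sum_mul_of_mem_span (hP : ∀ i, (P i).IsHomogeneous (d i))
    {t : MvPolynomial σ R} {n : ℕ} (ht : t.IsHomogeneous n) (hdn : ∀ i, d i ≤ n)
    (hmem : t ∈ Ideal.span (Set.range P)) :
    ∃ c : ι → MvPolynomial σ R, (∀ i, (c i).IsHomogeneous (n - d i)) ∧ t = ∑ i, c i * P i := by
  obtain ⟨c, rfl⟩ := Ideal.mem_span_range_iff_exists_fun.1 hmem
  refine ⟨fun i => homogeneousComponent (n - d i) (c i),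
    fun i => homogeneousComponent_isHomogeneous _ _, ?_⟩
  rw [← homogeneousComponent_eq_self ht, map_sum]
  exact Finset.sum_congr rfl fun i _ => homogeneousComponent_mul_of_isHomogeneous (hP i) (hdn i)

end CommSemiring

variable {R σ ι : Type*} [CommRing R] [Fintype ι] {P Q : ι → MvPolynomial σ R} {d : ι → ℕ}

theorem span_adjoin_restrictTotalDegree_eq_top (hd : ∀ i, 1 ≤ d i)
    (hP : ∀ i, (P i).IsHomogeneous (d i))
    (hQ : ∀ i, Q i - P i = 0 ∨ (Q i - P i).totalDegree < d i) {N : ℕ} (hdN : ∀ i, d i ≤ N)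
    (htop : ∀ n, N < n → ∀ t : MvPolynomial σ R, t.IsHomogeneous n →
      t ∈ Ideal.span (Set.range P)) :
    Submodule.span (Algebra.adjoin R (Set.range Q))
      (restrictTotalDegree σ R N : Set (MvPolynomial σ R)) = ⊤ := by
  set W := Submodule.span (Algebra.adjoin R (Set.range Q))
    (restrictTotalDegree σ R N : Set (MvPolynomial σ R))
  suffices hhom : ∀ n, ∀ t : MvPolynomial σ R, t.IsHomogeneous n → t ∈ W from
    eq_top_iff.2 fun f _ =>
      mem_of_forall_isHomogeneous_mem W (fun j _ => hhom j) (Nat.lt_succ_self _)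
  intro n
  induction n using Nat.strong_induction_on with
  | _ n IH =>
  intro t ht
  rcases le_or_gt n N with hn | hn
  · exact Submodule.subset_span ((mem_restrictTotalDegree σ N t).2 (ht.totalDegree_le.trans hn))
  obtain ⟨c, hc, rfl⟩ :=
    ht.exists_eq_sum_mul_of_mem_span hP (fun i => (hdN i).trans hn.le) (htop n hn t ht)
  have hsum : ∑ i, c i * P i = ∑ i, Q i * c i - ∑ i, c i * (Q i - P i) := by
    rw [← Finset.sum_sub_distrib]
    exact Finset.sum_congr rfl fun i _ => by ring
  rw [hsum]
  refine sub_mem (Submodule.sum_mem _ fun i _ => ?_)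
    (Submodule.sum_mem _ fun i _ => mem_of_forall_isHomogeneous_mem W IH ?_)
  · have hci : c i ∈ W := mem_of_forall_isHomogeneous_mem W IH
      ((hc i).totalDegree_le.trans_lt (by grind))
    exact Submodule.smul_mem W ⟨Q i, Algebra.subset_adjoin ⟨i, rfl⟩⟩ hci
  · rcases hQ i with h0 | hlt
    · rw [h0, mul_zero, totalDegree_zero]
      omega
    · calc (c i * (Q i - P i)).totalDegree ≤ (c i).totalDegree + (Q i - P i).totalDegree :=
            totalDegree_mul _ _
        _ < n := by grind [(hc i).totalDegree_le]

end MvPolynomial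

/-- If `ℂ[x₁,…,x_r]` is integral over the subalgebra generated by homogeneous
polynomials `P i` of degree `d i ≥ 1`, and each `Q i` differs from `P i` by zero
or by a polynomial of total degree `< d i`, then `ℂ[x₁,…,x_r]` is integral over
the subalgebra generated by the `Q i`. -/
theorem stmt8 {r : ℕ} (P Q : Fin r → MvPolynomial (Fin r) ℂ)
    (d : Fin r → ℕ) (hd : ∀ i, 1 ≤ d i)
    (hP : ∀ i, (P i).IsHomogeneous (d i))
    (hQ : ∀ i, Q i - P i = 0 ∨ (Q i - P i).totalDegree < d i)
    (hint : Algebra.IsIntegral (Algebra.adjoin ℂ (Set.range P))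
      (MvPolynomial (Fin r) ℂ)) :
    Algebra.IsIntegral (Algebra.adjoin ℂ (Set.range Q))
      (MvPolynomial (Fin r) ℂ) := by
  have : Algebra.FiniteType (Algebra.adjoin ℂ (Set.range P)) (MvPolynomial (Fin r) ℂ) :=
    .of_restrictScalars_finiteType ℂ _ _
  obtain ⟨S, hS⟩ := Module.finite_def.1 (Algebra.IsIntegral.finite
    (R := Algebra.adjoin ℂ (Set.range P)) (A := MvPolynomial (Fin r) ℂ))
  set N := max (S.sup totalDegree) (Finset.univ.sup d)
  have hSN : Submodule.span ℂ (S : Set (MvPolynomial (Fin r) ℂ)) ≤ restrictTotalDegree _ ℂ N :=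
    Submodule.span_le.2 fun s hs =>
      (mem_restrictTotalDegree _ N s).2 ((Finset.le_sup hs).trans (le_max_left _ _))
  have hsup : restrictTotalDegree _ ℂ N ⊔ (Ideal.span (Set.range P)).restrictScalars ℂ = ⊤ :=
    top_le_iff.1 ((span_sup_restrictScalars_ideal_span_eq_top hS).ge.trans (sup_le_sup_right hSN _))
  have hdN : ∀ i, d i ≤ N := fun i => (Finset.le_sup (Finset.mem_univ i)).trans (le_max_right _ _)
  have : Module.Finite (Algebra.adjoin ℂ (Set.range Q)) (MvPolynomial (Fin r) ℂ) :=
    .of_fg_of_span_eq_top (restrictTotalDegree_fg N) <|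
      span_adjoin_restrictTotalDegree_eq_top hd hP hQ hdN
        fun n hn t ht => ht.mem_span_of_mem_restrictTotalDegree_sup hP hn (hsup ▸ Submodule.mem_top)
  exact Algebra.IsIntegral.of_finite _ _
end

section
/- Let Q_1,…,Q_r ∈ ℂ[x_1,…,x_r] be polynomials such that the polynomial ring ℂ[x_1,…,x_r] is integral over the ℂ-subalgebra generated by Q_1,…,Q_r. Then the polynomial map φ : ℂ^r → ℂ^r defined by φ(b) = (Q_1(b),…,Q_r(b)) is surjective: for every a = (a_1,…,a_r) ∈ ℂ^r there exists b ∈ ℂ^r with Q_i(b) = a_i for all i. -/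
/-!
Since `ℂ[x₁,…,x_r]` is integral, hence algebraic, over `A = ℂ[Q₁,…,Q_r]`, the `r` elements `Qᵢ`
form a transcendence basis of a ring of transcendence degree `r`, so they are algebraically
independent and `A` is a polynomial ring in them. The ideal of `A` generated by the `Qᵢ - aᵢ` is
then maximal; by lying over it is contracted from a maximal ideal of `ℂ[x₁,…,x_r]`, which by the
Nullstellensatz is the ideal of a point `b`, and `Qᵢ(b) = aᵢ`.
-/

open MvPolynomial Algebra

theorem MvPolynomial.algebraicIndependent_of_isAlgebraic_adjoin {K σ : Type*} [CommRing K]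
    [IsDomain K] [Finite σ] (x : σ → MvPolynomial σ K)
    [Algebra.IsAlgebraic (adjoin K (Set.range x)) (MvPolynomial σ K)] :
    AlgebraicIndependent K x :=
  (Algebra.IsAlgebraic.isTranscendenceBasis_of_lift_le_trdeg_of_finite K x
    (by rw [MvPolynomial.trdeg_of_isDomain, Cardinal.lift_lift, Cardinal.lift_umax])).1

theorem AlgebraicIndependent.exists_isMaximal_forall_sub_algebraMap_mem {K S ι : Type*}
    [Field K] [CommRing S] [Algebra K S] {x : ι → S} (hx : AlgebraicIndependent K x)
    [Algebra.IsIntegral (adjoin K (Set.range x)) S] (a : ι → K) :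
    ∃ M : Ideal S, M.IsMaximal ∧ ∀ i, x i - algebraMap K S (a i) ∈ M := by
  let ψ : adjoin K (Set.range x) →ₐ[K] K := (aeval a).comp hx.aevalEquiv.symm.toAlgHom
  have hψ : Function.Surjective ψ := fun c => ⟨algebraMap K _ c, ψ.commutes c⟩
  have := RingHom.ker_isMaximal_of_surjective _ hψ
  obtain ⟨M, hM, hMψ⟩ := Ideal.exists_maximal_ideal_liesOver_of_isIntegral (S := S) (RingHom.ker ψ)
  refine ⟨M, hM, fun i => ?_⟩
  have hker : hx.aevalEquiv (X i - C (a i)) ∈ RingHom.ker ψ := by simp [ψ]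
  rw [hMψ.over, Ideal.mem_comap, hx.algebraMap_aevalEquiv] at hker
  simpa using hker

/-- If `ℂ[x₁,…,x_r]` is integral over the subalgebra generated by `Q₁,…,Q_r`,
then the polynomial map `b ↦ (Q₁(b),…,Q_r(b))` from `ℂ^r` to `ℂ^r` is surjective. -/
theorem stmt9 {r : ℕ} (Q : Fin r → MvPolynomial (Fin r) ℂ)
    (hint : Algebra.IsIntegral (Algebra.adjoin ℂ (Set.range Q))
      (MvPolynomial (Fin r) ℂ))
    (a : Fin r → ℂ) :
    ∃ b : Fin r → ℂ, ∀ i, eval b (Q i) = a i := by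
  obtain ⟨M, hM, hQa⟩ :=
    (algebraicIndependent_of_isAlgebraic_adjoin Q).exists_isMaximal_forall_sub_algebraMap_mem a
  obtain ⟨b, rfl⟩ := isMaximal_iff_eq_vanishingIdeal_singleton.mp hM
  refine ⟨b, fun i => sub_eq_zero.mp ?_⟩
  simpa using (mem_vanishingIdeal_singleton_iff b _).mp (hQa i)
end

section
/- Let Q_1,…,Q_r ∈ ℂ[x_1,…,x_r] be algebraically independent polynomials such that ℂ[x_1,…,x_r] is a free module of finite rank N over the ℂ-subalgebra A generated by Q_1,…,Q_r. Let a = (a_1,…,a_r) ∈ ℂ^r be such that the Jacobian determinant det[∂Q_i/∂x_j] evaluates to a nonzero complex number at every point b of the fiber F = {b ∈ ℂ^r : Q_i(b) = a_i for all i}. Then F has exactly N elements. -/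
/-!
Let `I` be the ideal generated by the `Q i - a i`. Reducing a basis of `ℂ[x]` over `A = ℂ[Q]`
along the character `Q ↦ a` of `A` gives a `ℂ`-basis of `ℂ[x] ⧸ I`, so this algebra has
dimension `N`. Its characters are the evaluations at the points of the fiber; they are linearly
independent, so the fiber is finite with at most `N` points.

At a point `b` of the fiber, first-order Taylor expansion of the `Q i` shows that the Jacobian
condition forces `𝔪_b ≤ I ⊔ 𝔪_b ^ 2`. Multiplying over the pairwise coprime `𝔪_b` gives
`√I ≤ I ⊔ (√I) ^ 2`, and since `√I` is nilpotent modulo `I`, the ideal `I` is radical.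
By the Nullstellensatz, `ℂ[x] ⧸ I` then embeds into the functions on the fiber, whence
`N ≤ |F|`.
-/

open MvPolynomial Function
open scoped Matrix

namespace Ideal
variable {R : Type*} [CommRing R]

theorem sup_mul_sup_le_sup_mul (I A B : Ideal R) : (I ⊔ A) * (I ⊔ B) ≤ I ⊔ A * B := by
  rw [mul_sup, sup_mul, sup_mul]
  exact sup_le (sup_le (mul_le_left.trans le_sup_left) (mul_le_right.trans le_sup_left))
    (sup_le (mul_le_left.trans le_sup_left) le_sup_right)

theorem prod_sup_le_sup_prod {ι : Type*} (s : Finset ι) (I : Ideal R) (f : ι → Ideal R) :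
    ∏ i ∈ s, (I ⊔ f i) ≤ I ⊔ ∏ i ∈ s, f i := by
  classical
  induction s using Finset.induction_on with
  | empty => simp
  | insert a s ha ih =>
    rw [Finset.prod_insert ha, Finset.prod_insert ha]
    exact (mul_mono_right ih).trans (sup_mul_sup_le_sup_mul I _ _)

theorem iInf_le_sup_iInf_sq {ι : Type*} {s : Finset ι} {f : ι → Ideal R} (I : Ideal R)
    (hf : (s : Set ι).Pairwise (IsCoprime on f)) (h : ∀ i ∈ s, f i ≤ I ⊔ f i ^ 2) :
    ⨅ i ∈ s, f i ≤ I ⊔ (⨅ i ∈ s, f i) ^ 2 := by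
  rw [← prod_eq_iInf_of_pairwise_isCoprime hf, ← Finset.prod_pow]
  exact (Finset.prod_le_prod' h).trans (prod_sup_le_sup_prod s I _)

theorem le_of_le_sup_sq {I K : Ideal R} (hK : K.FG) (hKI : K ≤ I.radical)
    (h : K ≤ I ⊔ K ^ 2) : K ≤ I := by
  have hpow : ∀ n, K ≤ I ⊔ K ^ n := by
    intro n
    induction n with
    | zero => simp [one_eq_top]
    | succ n ih =>
      calc K ≤ I ⊔ K * K := by rwa [← sq]
        _ ≤ I ⊔ K * (I ⊔ K ^ n) := sup_le_sup_left (mul_mono_right ih) _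
        _ ≤ I ⊔ K ^ (n + 1) := by
          rw [mul_sup, ← sup_assoc, pow_succ']
          exact sup_le_sup_right (sup_le le_rfl mul_le_right) _
  obtain ⟨n, hn⟩ := exists_pow_le_of_le_radical_of_fg hKI hK
  exact (hpow n).trans (sup_le le_rfl hn)

end Ideal

namespace Module.Basis

variable {k A S ι : Type*} [CommRing k] [CommRing A] [CommRing S] [Algebra A S]

theorem mem_map_algebraMap_iff (b : Basis ι A S) (J : Ideal A) {x : S} :
    x ∈ J.map (algebraMap A S) ↔ ∀ j, b.repr x j ∈ J := by
  refine ⟨fun hx => ?_, fun h => ?_⟩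
  · rw [← Submodule.restrictScalars_mem A, ← Ideal.smul_top_eq_map] at hx
    refine Submodule.smul_induction_on hx (fun r hr n _ j => ?_) (fun y z hy hz j => ?_)
    · simpa using J.mul_mem_right _ hr
    · simpa using J.add_mem (hy j) (hz j)
  · rw [← b.linearCombination_repr x, Finsupp.linearCombination_apply]
    refine Ideal.sum_mem _ fun j _ => ?_
    simp only [Algebra.smul_def]
    exact Ideal.mul_mem_right _ _ (Ideal.mem_map_of_mem _ (h j))

variable [Algebra k A] [Algebra k S] [IsScalarTower k A S] (χ : A →ₐ[k] k)

theorem mk_map_ker_smul (c : A) (x : S) :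
    Ideal.Quotient.mk ((RingHom.ker χ).map (algebraMap A S)) (c • x) =
      χ c • Ideal.Quotient.mk ((RingHom.ker χ).map (algebraMap A S)) x := by
  have hc : c - algebraMap k A (χ c) ∈ RingHom.ker χ := by simp [RingHom.mem_ker]
  rw [Algebra.smul_def, Algebra.smul_def, map_mul]
  congr 1
  rw [← Ideal.Quotient.mk_algebraMap, Ideal.Quotient.eq,
    IsScalarTower.algebraMap_apply k A S, ← map_sub]
  exact Ideal.mem_map_of_mem _ hc

noncomputable def quotientMapKer [Fintype ι] (b : Basis ι A S) :
    Basis ι k (S ⧸ (RingHom.ker χ).map (algebraMap A S)) :=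
  .mk (v := fun j => Ideal.Quotient.mk _ (b j))
    (by
      refine Fintype.linearIndependent_iff.2 fun g hg j => ?_
      have hmem : ∑ i, g i • b i ∈ (RingHom.ker χ).map (algebraMap A S) := by
        rw [← Ideal.Quotient.eq_zero_iff_mem, map_sum]
        simpa only [← algebraMap_smul A (g _), mk_map_ker_smul, AlgHom.commutes,
          Algebra.algebraMap_self, RingHom.id_apply] using hg
      have := (b.mem_map_algebraMap_iff _).1 hmem j
      simp only [← algebraMap_smul A (g _), b.repr_sum_self] at this
      simpa using this)
    (by
      rintro q -
      obtain ⟨x, rfl⟩ := Ideal.Quotient.mk_surjective q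
      rw [← b.sum_repr x, map_sum]
      simp only [mk_map_ker_smul]
      exact Submodule.sum_mem _ fun j _ =>
        Submodule.smul_mem _ _ (Submodule.subset_span ⟨j, rfl⟩))

end Module.Basis

noncomputable def AlgebraicIndependent.evalAt {R S ι : Type*} [CommRing R] [CommRing S]
    [Algebra R S] {Q : ι → S} (hQ : AlgebraicIndependent R Q) (a : ι → R) :
    Algebra.adjoin R (Set.range Q) →ₐ[R] R :=
  (aeval a).comp hQ.aevalEquiv.symm.toAlgHom

@[simp]
theorem AlgebraicIndependent.evalAt_aevalEquiv {R S ι : Type*} [CommRing R] [CommRing S]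
    [Algebra R S] {Q : ι → S} (hQ : AlgebraicIndependent R Q) (a : ι → R)
    (p : MvPolynomial ι R) : hQ.evalAt a (hQ.aevalEquiv p) = aeval a p := by
  simp [AlgebraicIndependent.evalAt]

namespace MvPolynomial

variable {R : Type*} [CommRing R] {σ ι : Type*}

noncomputable def fiberIdeal (Q : ι → MvPolynomial σ R) (a : ι → R) :
    Ideal (MvPolynomial σ R) :=
  Ideal.span (Set.range fun i => Q i - C (a i))

theorem sub_C_mem_fiberIdeal (Q : ι → MvPolynomial σ R) (a : ι → R) (i : ι) :
    Q i - C (a i) ∈ fiberIdeal Q a :=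
  Ideal.subset_span ⟨i, rfl⟩

theorem ker_aeval_eq_fiberIdeal_X (a : σ → R) :
    RingHom.ker (aeval a : MvPolynomial σ R →ₐ[R] R) = fiberIdeal X a := by
  refine le_antisymm (fun p hp => ?_) (Ideal.span_le.2 ?_)
  · have h : Ideal.Quotient.mkₐ R (fiberIdeal X a) = (Algebra.ofId R _).comp (aeval a) :=
      algHom_ext fun i => by
        simpa [← Ideal.Quotient.mk_algebraMap, Ideal.Quotient.eq] using sub_C_mem_fiberIdeal X a i
    have hmk := congr($h p)
    rw [AlgHom.comp_apply, (RingHom.mem_ker).1 hp, map_zero] at hmk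
    exact Ideal.Quotient.eq_zero_iff_mem.1 hmk
  · rintro _ ⟨i, rfl⟩
    simp

theorem map_fiberIdeal {τ : Type*} (f : MvPolynomial σ R →ₐ[R] MvPolynomial τ R)
    (Q : ι → MvPolynomial σ R) (a : ι → R) :
    (fiberIdeal Q a).map f = fiberIdeal (fun i => f (Q i)) a := by
  simp [fiberIdeal, Ideal.map_span, ← Set.range_comp, comp_def]

theorem fiberIdeal_eq_map_ker_evalAt {Q : ι → MvPolynomial σ R} (hQ : AlgebraicIndependent R Q)
    (a : ι → R) :
    fiberIdeal Q a = (RingHom.ker (hQ.evalAt a)).map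
      (algebraMap (Algebra.adjoin R (Set.range Q)) (MvPolynomial σ R)) := by
  have hQ' : fiberIdeal Q a = (fiberIdeal X a).map (aeval Q) := by
    simp only [map_fiberIdeal, aeval_X]
  rw [hQ', ← ker_aeval_eq_fiberIdeal_X]
  refine le_antisymm (Ideal.map_le_iff_le_comap.2 fun p hp => ?_)
    (Ideal.map_le_iff_le_comap.2 fun c hc => ?_)
  · rw [Ideal.mem_comap, ← hQ.algebraMap_aevalEquiv]
    exact Ideal.mem_map_of_mem _ (by simpa using hp)
  · rw [Ideal.mem_comap, ← hQ.aevalEquiv.apply_symm_apply c, hQ.algebraMap_aevalEquiv]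
    exact Ideal.mem_map_of_mem _ hc

noncomputable def basisQuotientFiberIdeal {κ : Type*} [Fintype κ] {Q : ι → MvPolynomial σ R}
    (hQ : AlgebraicIndependent R Q)
    (B : Module.Basis κ (Algebra.adjoin R (Set.range Q)) (MvPolynomial σ R)) (a : ι → R) :
    Module.Basis κ R (MvPolynomial σ R ⧸ fiberIdeal Q a) :=
  let e : (MvPolynomial σ R ⧸ (RingHom.ker (hQ.evalAt a)).map (algebraMap _ _)) ≃ₐ[R]
      (MvPolynomial σ R ⧸ fiberIdeal Q a) :=
    Ideal.quotientEquivAlgOfEq R (fiberIdeal_eq_map_ker_evalAt hQ a).symm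
  (B.quotientMapKer (hQ.evalAt a)).map e.toLinearEquiv

variable {k : Type*} [Field k]

theorem zeroLocus_fiberIdeal (Q : ι → MvPolynomial σ k) (a : ι → k) :
    zeroLocus k (fiberIdeal Q a) = {b | ∀ i, eval b (Q i) = a i} := by
  simp [fiberIdeal, zeroLocus_span, sub_eq_zero]

theorem X_sub_C_mem_vanishingIdeal_singleton (b : σ → k) (j : σ) :
    X j - C (b j) ∈ vanishingIdeal k {b} := by
  simp

theorem sub_C_eval_mem_vanishingIdeal_singleton (b : σ → k) (f : MvPolynomial σ k) :
    f - C (eval b f) ∈ vanishingIdeal k {b} := by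
  simp

theorem sub_sum_pderiv_mem_vanishingIdeal_sq [Fintype σ] (b : σ → k) (f : MvPolynomial σ k) :
    f - C (eval b f) - ∑ j, C (eval b (pderiv j f)) * (X j - C (b j)) ∈
      vanishingIdeal k {b} ^ 2 := by
  classical
  induction f using MvPolynomial.induction_on with
  | C c => simp
  | add f g hf hg =>
    convert add_mem hf hg using 1
    simp only [map_add, add_mul, Finset.sum_add_distrib]
    ring
  | mul_X f i hf =>
    have hsum : ∑ j, C (eval b (pderiv j (f * X i))) * (X j - C (b j)) =
        C (b i) * ∑ j, C (eval b (pderiv j f)) * (X j - C (b j)) +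
          C (eval b f) * (X i - C (b i)) := by
      simp only [pderiv_mul, pderiv_X, Pi.single_apply, mul_ite, mul_one, mul_zero, map_add,
        map_mul, eval_X, add_mul, Finset.sum_add_distrib, apply_ite (eval b), apply_ite C,
        ite_mul, map_zero, zero_mul, Finset.sum_ite_eq, Finset.mem_univ, if_true,
        Finset.sum_mul, mul_assoc, mul_comm (C (b i))]
    have key : f * X i - C (eval b (f * X i)) -
          ∑ j, C (eval b (pderiv j (f * X i))) * (X j - C (b j)) =
        C (b i) * (f - C (eval b f) - ∑ j, C (eval b (pderiv j f)) * (X j - C (b j))) +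
          (X i - C (b i)) * (f - C (eval b f)) := by
      rw [hsum, eval_mul, eval_X, map_mul]
      ring
    rw [key]
    refine add_mem (Ideal.mul_mem_left _ _ hf) ?_
    rw [sq]
    exact (Ideal.mul_mem_mul (X_sub_C_mem_vanishingIdeal_singleton b i)
        (sub_C_eval_mem_vanishingIdeal_singleton b f))

theorem vanishingIdeal_singleton_le_fiberIdeal_sup_sq [Fintype σ] [DecidableEq σ]
    {Q : σ → MvPolynomial σ k} {a b : σ → k} (hb : ∀ i, eval b (Q i) = a i)
    (hJ : eval b (Matrix.of fun i j : σ => pderiv j (Q i)).det ≠ 0) :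
    vanishingIdeal k {b} ≤ fiberIdeal Q a ⊔ vanishingIdeal k {b} ^ 2 := by
  set J := fiberIdeal Q a ⊔ vanishingIdeal k {b} ^ 2
  let M : Matrix σ σ k := Matrix.of fun i j => eval b (pderiv j (Q i))
  let y : σ → MvPolynomial σ k := fun j => X j - C (b j)
  have hM : IsUnit M.det := by
    rw [isUnit_iff_ne_zero]
    convert hJ
    rw [RingHom.map_det]
    rfl
  have hMy : ∀ i, (M.map C *ᵥ y) i ∈ J := fun i => by
    have h := sub_sum_pderiv_mem_vanishingIdeal_sq b (Q i)
    rw [hb i] at h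
    convert sub_mem (Ideal.mem_sup_left (sub_C_mem_fiberIdeal Q a i)) (Ideal.mem_sup_right h)
      using 1
    simp [Matrix.mulVec, dotProduct, M, y]
  have hy : ∀ j, y j ∈ J := fun j => by
    have : y = M⁻¹.map C *ᵥ (M.map C *ᵥ y) := by
      rw [Matrix.mulVec_mulVec, ← Matrix.map_mul, Matrix.nonsing_inv_mul _ hM,
        Matrix.map_one _ (map_zero C) (map_one C), Matrix.one_mulVec]
    rw [this]
    exact Ideal.sum_mem _ fun i _ => Ideal.mul_mem_left _ _ (hMy i)
  intro f hf
  have h := sub_sum_pderiv_mem_vanishingIdeal_sq b f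
  have hf0 : eval b f = 0 := by simpa using hf
  rw [hf0, C_0, sub_zero] at h
  rw [← sub_add_cancel f (∑ j, C (eval b (pderiv j f)) * (X j - C (b j)))]
  exact add_mem (Ideal.mem_sup_right h) (Ideal.sum_mem _ fun j _ => Ideal.mul_mem_left _ _ (hy j))

variable (I : Ideal (MvPolynomial σ k))

noncomputable def quotientEval (x : zeroLocus k I) : (MvPolynomial σ k ⧸ I) →ₐ[k] k :=
  Ideal.Quotient.liftₐ I (aeval x.1) x.2

@[simp]
theorem quotientEval_mk (x : zeroLocus k I) (p : MvPolynomial σ k) :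
    quotientEval I x (Ideal.Quotient.mk I p) = aeval x.1 p :=
  rfl

theorem quotientEval_injective : Injective (quotientEval I) := by
  intro x y h
  ext i
  simpa using DFunLike.congr_fun h (Ideal.Quotient.mk I (X i))

theorem vanishingIdeal_singleton_injective :
    Injective fun x : σ → k => vanishingIdeal k {x} := by
  intro x y h
  funext i
  have hy : X i - C (x i) ∈ vanishingIdeal k {y} := by
    rw [← show vanishingIdeal k {x} = vanishingIdeal k {y} from h]
    exact X_sub_C_mem_vanishingIdeal_singleton x i
  simpa [sub_eq_zero, eq_comm] using hy

section
variable [Module.Finite k (MvPolynomial σ k ⧸ I)]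

theorem finite_zeroLocus : (zeroLocus k I).Finite :=
  Set.finite_coe_iff.1 (Finite.of_injective _ (quotientEval_injective I))

theorem ncard_zeroLocus_le_finrank :
    (zeroLocus k I).ncard ≤ Module.finrank k (MvPolynomial σ k ⧸ I) :=
  (Nat.card_le_card_of_injective _ (quotientEval_injective I)).trans
    (card_algHom_le_finrank k _ k)

end

variable [IsAlgClosed k] [Finite σ]

theorem isRadical_of_vanishingIdeal_singleton_le_sup_sq (hfin : (zeroLocus k I).Finite)
    (h : ∀ b ∈ zeroLocus k I, vanishingIdeal k {b} ≤ I ⊔ vanishingIdeal k {b} ^ 2) :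
    I.IsRadical := by
  have hK : I.radical = ⨅ b ∈ hfin.toFinset, vanishingIdeal k {b} := by
    rw [← vanishingIdeal_zeroLocus_eq_radical (K := k)]
    ext p
    simp only [Ideal.mem_iInf, Set.Finite.mem_toFinset, mem_vanishingIdeal_iff,
      Set.mem_singleton_iff, forall_eq]
  have hcop :
      (hfin.toFinset : Set (σ → k)).Pairwise (IsCoprime on fun b => vanishingIdeal k {b}) :=
    fun b _ c _ hbc => Ideal.isCoprime_of_isMaximal (vanishingIdeal_singleton_injective.ne hbc)
  have hstep := Ideal.iInf_le_sup_iInf_sq I hcop fun b hb => h b (hfin.mem_toFinset.1 hb)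
  rw [← hK] at hstep
  exact Ideal.le_of_le_sup_sq (IsNoetherian.noetherian _) le_rfl hstep

variable [Module.Finite k (MvPolynomial σ k ⧸ I)]

theorem finrank_le_ncard_zeroLocus (hI : I.IsRadical) :
    Module.finrank k (MvPolynomial σ k ⧸ I) ≤ (zeroLocus k I).ncard := by
  have := (finite_zeroLocus I).fintype
  let Φ := LinearMap.pi fun x : zeroLocus k I => (quotientEval I x).toLinearMap
  have hΦ : Injective Φ := by
    rw [← LinearMap.ker_eq_bot, Submodule.eq_bot_iff]
    rintro q hq
    obtain ⟨p, rfl⟩ := Ideal.Quotient.mk_surjective q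
    refine Ideal.Quotient.eq_zero_iff_mem.2 (hI ?_)
    rw [← vanishingIdeal_zeroLocus_eq_radical (K := k)]
    exact fun x hx => by simpa [Φ] using congr_fun hq ⟨x, hx⟩
  have := LinearMap.finrank_le_finrank_of_injective hΦ
  rwa [Module.finrank_fintype_fun_eq_card, ← Nat.card_eq_fintype_card,
    Nat.card_coe_set_eq] at this

theorem ncard_zeroLocus_eq_finrank (hI : I.IsRadical) :
    (zeroLocus k I).ncard = Module.finrank k (MvPolynomial σ k ⧸ I) :=
  (ncard_zeroLocus_le_finrank I).antisymm (finrank_le_ncard_zeroLocus I hI)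

end MvPolynomial

/-- If `ℂ[x₁,…,x_r]` is free of rank `N` over the subalgebra generated by
algebraically independent `Q₁,…,Q_r`, and the Jacobian determinant
`det [∂Q_i/∂x_j]` is nonzero at every point of the fiber
`F = {b : Q_i(b) = a_i for all i}`, then `F` has exactly `N` elements. -/
theorem stmt12 {r : ℕ} (Q : Fin r → MvPolynomial (Fin r) ℂ)
    (hQ : AlgebraicIndependent ℂ Q) (N : ℕ)
    (B : Module.Basis (Fin N) (Algebra.adjoin ℂ (Set.range Q)) (MvPolynomial (Fin r) ℂ))
    (a : Fin r → ℂ)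
    (hJ : ∀ b ∈ {b : Fin r → ℂ | ∀ i, eval b (Q i) = a i},
      eval b (Matrix.of fun i j : Fin r => pderiv j (Q i)).det ≠ 0) :
    {b : Fin r → ℂ | ∀ i, eval b (Q i) = a i}.Finite ∧
      {b : Fin r → ℂ | ∀ i, eval b (Q i) = a i}.ncard = N := by
  let e := basisQuotientFiberIdeal hQ B a
  have := Module.Finite.of_basis e
  have hfin := finite_zeroLocus (fiberIdeal Q a)
  have hrad : (fiberIdeal Q a).IsRadical :=
    isRadical_of_vanishingIdeal_singleton_le_sup_sq _ hfin fun b hb => by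
      rw [zeroLocus_fiberIdeal] at hb
      exact vanishingIdeal_singleton_le_fiberIdeal_sup_sq hb (hJ b hb)
  rw [← zeroLocus_fiberIdeal]
  refine ⟨hfin, ?_⟩
  rw [ncard_zeroLocus_eq_finrank _ hrad, Module.finrank_eq_card_basis e, Fintype.card_fin]
end
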